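/- arXiv:0806.0177 — 3 statements merged into one kernel-verified Lean document; each statement's English description precedes it below -/
import Mathlib

section
/- Let K be a smooth solution of the oriented associativity equations (AE) on ℝⁿ, let λ, μ ∈ ℝ with λ + μ ≠ 0, let ψ_λ be a smooth solution of the vector spectral problem with parameter λ, let χ₋ be a smooth solution of the scalar spectral problem with parameter −λ, and let χ_μ be a smooth solution of the scalar spectral problem with parameter μ. Define Ξ = (λμ/(λ+μ)) ψ_λ^ν (∂_ν χ_μ) χ₋. Then the pair (G, Ξ) with G^α = ψ_λ^α χ₋ satisfies the linearization of the scalar spectral problem with parameter μ: ∂_α∂_γ Ξ = μ ∂_α∂_γ G^ν ∂_ν χ_μ + μ ∂_α∂_γ K^ν ∂_ν Ξ for all α,γ. -/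
/-- Partial derivative of `f` in the `i`-th coordinate direction on `ℝⁿ`. -/
noncomputable def pd {n : ℕ} (i : Fin n) (f : (Fin n → ℝ) → ℝ) : (Fin n → ℝ) → ℝ :=
  fun x => fderiv ℝ f x (Pi.single i 1)

lemma pd_congr {n : ℕ} (i : Fin n) {f g : (Fin n → ℝ) → ℝ} (h : ∀ x, f x = g x) :
    pd i f = pd i g := by rw [show f = g from funext h]

lemma ContDiff.pd' {n : ℕ} {f : (Fin n → ℝ) → ℝ} (hf : ContDiff ℝ (⊤ : ℕ∞) f) (i : Fin n) :
    ContDiff ℝ (⊤ : ℕ∞) (pd i f) := by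
  unfold pd
  exact (hf.fderiv_right le_rfl).clm_apply contDiff_const

lemma pd_add {n : ℕ} (i : Fin n) {f g : (Fin n → ℝ) → ℝ}
    (hf : Differentiable ℝ f) (hg : Differentiable ℝ g) (x : Fin n → ℝ) :
    pd i (fun y => f y + g y) x = pd i f x + pd i g x := by
  unfold pd
  rw [fderiv_fun_add (hf x) (hg x)]
  simp

lemma pd_mul {n : ℕ} (i : Fin n) {f g : (Fin n → ℝ) → ℝ}
    (hf : Differentiable ℝ f) (hg : Differentiable ℝ g) (x : Fin n → ℝ) :
    pd i (fun y => f y * g y) x = pd i f x * g x + f x * pd i g x := by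
  unfold pd
  rw [fderiv_fun_mul (hf x) (hg x)]
  simp only [ContinuousLinearMap.add_apply, ContinuousLinearMap.smul_apply, smul_eq_mul]
  ring

lemma pd_const_mul {n : ℕ} (i : Fin n) (c : ℝ) {f : (Fin n → ℝ) → ℝ}
    (hf : Differentiable ℝ f) (x : Fin n → ℝ) :
    pd i (fun y => c * f y) x = c * pd i f x := by
  unfold pd
  rw [fderiv_const_mul (hf x)]
  simp

lemma pd_sum {n : ℕ} (i : Fin n) {ι : Type*} (s : Finset ι)
    {f : ι → (Fin n → ℝ) → ℝ} (hf : ∀ j, Differentiable ℝ (f j)) (x : Fin n → ℝ) :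
    pd i (fun y => ∑ j ∈ s, f j y) x = ∑ j ∈ s, pd i (f j) x := by
  unfold pd
  rw [fderiv_fun_sum (fun j _ => (hf j) x)]
  simp

lemma sum3_comm {n : ℕ} (f : Fin n → Fin n → Fin n → ℝ) :
    ∑ a, ∑ b, ∑ c, f a b c = ∑ b, ∑ c, ∑ a, f a b c := by
  rw [Finset.sum_comm]
  exact Finset.sum_congr rfl fun b _ => Finset.sum_comm

lemma sum_congr2 {n : ℕ} {f g : Fin n → Fin n → ℝ} (h : ∀ a b, f a b = g a b) :
    ∑ a, ∑ b, f a b = ∑ a, ∑ b, g a b :=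
  Finset.sum_congr rfl fun a _ => Finset.sum_congr rfl fun b _ => h a b

lemma sum_congr3 {n : ℕ} {f g : Fin n → Fin n → Fin n → ℝ}
    (h : ∀ a b c, f a b c = g a b c) :
    ∑ a, ∑ b, ∑ c, f a b c = ∑ a, ∑ b, ∑ c, g a b c :=
  Finset.sum_congr rfl fun a _ => sum_congr2 (h a)

lemma sum_step {n : ℕ} (A : Fin n → Fin n → ℝ) (ψ u : Fin n → ℝ) (lam mu : ℝ) :
    (∑ ν, ((lam * ∑ κ, A κ ν * ψ κ) * u ν + ψ ν * (mu * ∑ κ, A ν κ * u κ)))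
      = (lam + mu) * ∑ ν, ∑ κ, A κ ν * ψ κ * u ν := by
  simp only [Finset.sum_add_distrib, Finset.mul_sum, Finset.sum_mul, mul_add, add_mul]
  have h2 : (∑ x : Fin n, ∑ i : Fin n, ψ x * (mu * (A x i * u i)))
      = ∑ x : Fin n, ∑ i : Fin n, ψ i * (mu * (A i x * u x)) := Finset.sum_comm
  have e1 : (∑ x : Fin n, ∑ i : Fin n, lam * (A i x * ψ i) * u x)
      = ∑ x : Fin n, ∑ x_1 : Fin n, lam * (A x_1 x * ψ x_1 * u x) :=
    sum_congr2 fun a b => by ring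
  have e2 : (∑ x : Fin n, ∑ i : Fin n, ψ i * (mu * (A i x * u x)))
      = ∑ x : Fin n, ∑ x_1 : Fin n, mu * (A x_1 x * ψ x_1 * u x) :=
    sum_congr2 fun a b => by ring
  linear_combination e1 + h2 + e2
lemma key {n : ℕ} (Bg Ba C : Fin n → Fin n → ℝ) (D : Fin n → Fin n → Fin n → ℝ)
    (q ψ u w Pa Pg : Fin n → ℝ) (m ma mg S lam mu c : ℝ)
    (hc : c * (lam + mu) = lam * mu)
    (hS : S = ∑ ν, ψ ν * u ν)
    (hPa : ∀ κ, Pa κ = lam * ∑ ρ, Ba ρ κ * ψ ρ)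
    (hPg : ∀ κ, Pg κ = lam * ∑ ρ, Bg ρ κ * ψ ρ)
    (hae : ∀ κ ρ, (∑ ν, Ba ν ρ * Bg κ ν) = ∑ ν, q ν * D ν κ ρ) :
    lam * mu * ((∑ ν, ∑ κ, (C κ ν * ψ κ * u ν + Bg κ ν * Pa κ * u ν
          + Bg κ ν * ψ κ * (mu * ∑ ρ, Ba ν ρ * u ρ))) * m
        + (∑ ν, ∑ κ, Bg κ ν * ψ κ * u ν) * ma)
      + c * (((lam + mu) * (∑ ν, ∑ κ, Ba κ ν * ψ κ * u ν)) * mg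
        + S * ((-lam) * ∑ ν, q ν * w ν))
    = mu * (∑ ν, ((lam * ∑ κ, (C κ ν * ψ κ + Bg κ ν * Pa κ)) * m + Pg ν * ma
          + Pa ν * mg + ψ ν * ((-lam) * ∑ ρ, q ρ * w ρ)) * u ν)
      + mu * (∑ ν, q ν * (lam * mu * ((∑ ρ, ∑ κ, D ν κ ρ * ψ κ * u ρ) * m)
          + c * (S * w ν))) := by
  subst hS
  simp only [hPa, hPg, Finset.mul_sum, Finset.sum_mul, Finset.sum_add_distrib,
    mul_add, add_mul, neg_mul]
  have E1 : (∑ x : Fin n, ∑ i : Fin n, lam * mu * (C i x * ψ i * u x * m))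
      = ∑ x : Fin n, ∑ i : Fin n, mu * (lam * (C i x * ψ i) * m * u x) :=
    sum_congr2 fun a b => by ring
  have E2 : (∑ x : Fin n, ∑ x_1 : Fin n, ∑ i : Fin n,
        lam * mu * (Bg x_1 x * (lam * (Ba i x_1 * ψ i)) * u x * m))
      = ∑ x : Fin n, ∑ x_1 : Fin n, ∑ i : Fin n,
        mu * (lam * (Bg x_1 x * (lam * (Ba i x_1 * ψ i))) * m * u x) :=
    sum_congr3 fun a b c => by ring
  have E3 : (∑ x : Fin n, ∑ x_1 : Fin n, ∑ i : Fin n,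
        lam * mu * (Bg x_1 x * ψ x_1 * (mu * (Ba x i * u i)) * m))
      = ∑ x : Fin n, ∑ x_1 : Fin n, ∑ i : Fin n,
        mu * (q x * (lam * mu * (D x i x_1 * ψ i * u x_1 * m))) := by
    calc (∑ x : Fin n, ∑ x_1 : Fin n, ∑ i : Fin n,
          lam * mu * (Bg x_1 x * ψ x_1 * (mu * (Ba x i * u i)) * m))
        = ∑ x_1 : Fin n, ∑ i : Fin n, ∑ x : Fin n,
          lam * mu * (Bg x_1 x * ψ x_1 * (mu * (Ba x i * u i)) * m) := sum3_comm _
      _ = ∑ x_1 : Fin n, ∑ i : Fin n,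
            (∑ x : Fin n, Ba x i * Bg x_1 x) * (lam * mu * mu * m * (ψ x_1 * u i)) := by
          refine sum_congr2 fun a b => ?_
          rw [Finset.sum_mul]
          exact Finset.sum_congr rfl fun ν _ => by ring
      _ = ∑ x_1 : Fin n, ∑ i : Fin n,
            (∑ x : Fin n, q x * D x x_1 i) * (lam * mu * mu * m * (ψ x_1 * u i)) := by
          refine sum_congr2 fun a b => ?_
          rw [hae]
      _ = ∑ x_1 : Fin n, ∑ i : Fin n, ∑ x : Fin n,
            mu * (q x * (lam * mu * (D x x_1 i * ψ x_1 * u i * m))) := by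
          refine sum_congr2 fun a b => ?_
          rw [Finset.sum_mul]
          exact Finset.sum_congr rfl fun ν _ => by ring
      _ = ∑ x : Fin n, ∑ x_1 : Fin n, ∑ i : Fin n,
            mu * (q x * (lam * mu * (D x x_1 i * ψ x_1 * u i * m))) := (sum3_comm _).symm
      _ = ∑ x : Fin n, ∑ x_1 : Fin n, ∑ i : Fin n,
            mu * (q x * (lam * mu * (D x i x_1 * ψ i * u x_1 * m))) :=
          Finset.sum_congr rfl fun a _ => Finset.sum_comm
  have E4 : (∑ x : Fin n, ∑ i : Fin n, lam * mu * (Bg i x * ψ i * u x * ma))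
      = ∑ x : Fin n, ∑ i : Fin n, mu * (lam * (Bg i x * ψ i) * ma * u x) :=
    sum_congr2 fun a b => by ring
  have E5 : ((∑ x : Fin n, ∑ i : Fin n, c * (lam * (Ba i x * ψ i * u x) * mg))
        + ∑ x : Fin n, ∑ i : Fin n, c * (mu * (Ba i x * ψ i * u x) * mg))
      = ∑ x : Fin n, ∑ i : Fin n, mu * (lam * (Ba i x * ψ i) * mg * u x) := by
    rw [← Finset.sum_add_distrib]
    refine Finset.sum_congr rfl fun a _ => ?_
    rw [← Finset.sum_add_distrib]
    refine Finset.sum_congr rfl fun b _ => ?_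
    linear_combination (Ba b a * ψ b * u a * mg) * hc
  have E6 : (∑ x : Fin n, ∑ i : Fin n, c * (ψ i * u i * -(lam * (q x * w x))))
      = (∑ x : Fin n, ∑ i : Fin n, mu * (ψ x * -(lam * (q i * w i)) * u x))
        + ∑ x : Fin n, ∑ i : Fin n, mu * (q x * (c * (ψ i * u i * w x))) := by
    have h5 : (∑ x : Fin n, ∑ i : Fin n, mu * (ψ x * -(lam * (q i * w i)) * u x))
        = ∑ x : Fin n, ∑ i : Fin n, mu * (ψ i * -(lam * (q x * w x)) * u i) :=
      Finset.sum_comm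
    rw [h5, ← Finset.sum_add_distrib]
    refine Finset.sum_congr rfl fun a _ => ?_
    rw [← Finset.sum_add_distrib]
    refine Finset.sum_congr rfl fun b _ => ?_
    linear_combination (-(ψ b * u b * (q a * w a))) * hc
  linear_combination E1 + E2 + E3 + E4 + E5 + E6

/-- the pair `(G, Ξ)` with `G^α = ψ_λ^α χ₋` and
`Ξ = (λμ/(λ+μ)) ψ_λ^ν (∂_ν χ_μ) χ₋` satisfies the linearization of the scalar
spectral problem with parameter `μ`. -/
theorem extended_flow_sigma_scalar_spectral
    {n : ℕ} (hn : 1 ≤ n)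
    (K ψl : Fin n → (Fin n → ℝ) → ℝ) (χm χmu : (Fin n → ℝ) → ℝ) (lam mu : ℝ)
    (hlm : lam + mu ≠ 0)
    (hK : ∀ α, ContDiff ℝ (⊤ : ℕ∞) (K α))
    (hψl : ∀ α, ContDiff ℝ (⊤ : ℕ∞) (ψl α))
    (hχm : ContDiff ℝ (⊤ : ℕ∞) χm)
    (hχmu : ContDiff ℝ (⊤ : ℕ∞) χmu)
    (hAE : ∀ α β γ ν, ∀ x : Fin n → ℝ,
      ∑ ρ, pd α (pd ρ (K ν)) x * pd β (pd γ (K ρ)) x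
        = ∑ ρ, pd α (pd β (K ρ)) x * pd ρ (pd γ (K ν)) x)
    (hspl : ∀ α β, ∀ x : Fin n → ℝ,
      pd β (ψl α) x = lam * ∑ γ, pd β (pd γ (K α)) x * ψl γ x)
    (hsspm : ∀ α γ, ∀ x : Fin n → ℝ,
      pd α (pd γ χm) x = (-lam) * ∑ ν, pd α (pd γ (K ν)) x * pd ν χm x)
    (hsspmu : ∀ α γ, ∀ x : Fin n → ℝ,
      pd α (pd γ χmu) x = mu * ∑ ν, pd α (pd γ (K ν)) x * pd ν χmu x) :
    ∀ α γ, ∀ x : Fin n → ℝ,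
      pd α (pd γ (fun y =>
          (lam * mu / (lam + mu)) * (∑ ν, ψl ν y * pd ν χmu y) * χm y)) x
        = mu * (∑ ν, pd α (pd γ (fun y => ψl ν y * χm y)) x * pd ν χmu x)
          + mu * (∑ ν, pd α (pd γ (K ν)) x
              * pd ν (fun y =>
                  (lam * mu / (lam + mu)) * (∑ κ, ψl κ y * pd κ χmu y) * χm y) x) := by
  have hcc : (lam * mu / (lam + mu)) * (lam + mu) = lam * mu := div_mul_cancel₀ _ hlm
  -- differentiability bookkeeping
  have dK2 : ∀ i k v, Differentiable ℝ (pd i (pd k (K v))) :=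
    fun i k v => (((hK v).pd' k).pd' i).differentiable (by simp)
  have sK1 : ∀ k v, ContDiff ℝ (⊤ : ℕ∞) (pd k (K v)) := fun k v => (hK v).pd' k
  have dψ : ∀ v, Differentiable ℝ (ψl v) := fun v => (hψl v).differentiable (by simp)
  have dψ1 : ∀ i v, Differentiable ℝ (pd i (ψl v)) :=
    fun i v => ((hψl v).pd' i).differentiable (by simp)
  have sχmu1 : ∀ v, ContDiff ℝ (⊤ : ℕ∞) (pd v χmu) := fun v => hχmu.pd' v
  have dχmu1 : ∀ v, Differentiable ℝ (pd v χmu) := fun v => (sχmu1 v).differentiable (by simp)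
  have dχm : Differentiable ℝ χm := hχm.differentiable (by simp)
  have dχm1 : ∀ v, Differentiable ℝ (pd v χm) := fun v => (hχm.pd' v).differentiable (by simp)
  have sS : ContDiff ℝ (⊤ : ℕ∞) (fun y => ∑ ν, ψl ν y * pd ν χmu y) :=
    ContDiff.sum fun ν _ => (hψl ν).mul (sχmu1 ν)
  have dS : Differentiable ℝ (fun y => ∑ ν, ψl ν y * pd ν χmu y) := sS.differentiable (by simp)
  have dSψ : ∀ ν, Differentiable ℝ (fun y => ψl ν y * pd ν χmu y) :=
    fun ν => (dψ ν).mul (dχmu1 ν)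
  -- first derivative of S
  have hdS : ∀ i (x : Fin n → ℝ), pd i (fun y => ∑ ν, ψl ν y * pd ν χmu y) x
      = (lam + mu) * ∑ ν, ∑ κ, pd i (pd κ (K ν)) x * ψl κ x * pd ν χmu x := by
    intro i x
    rw [pd_sum i Finset.univ dSψ x]
    rw [show (∑ ν, pd i (fun y => ψl ν y * pd ν χmu y) x)
        = ∑ ν, (pd i (ψl ν) x * pd ν χmu x + ψl ν x * pd i (pd ν χmu) x) from
      Finset.sum_congr rfl fun ν _ => pd_mul i (dψ ν) (dχmu1 ν) x]
    simp only [hspl, hsspmu]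
    exact sum_step (fun k v => pd i (pd k (K v)) x) (fun k => ψl k x)
      (fun v => pd v χmu x) lam mu
  -- first derivative of Ξ
  have hdΞ : ∀ i, pd i (fun y =>
        (lam * mu / (lam + mu)) * (∑ ν, ψl ν y * pd ν χmu y) * χm y)
      = fun x => lam * mu * ((∑ ν, ∑ κ, pd i (pd κ (K ν)) x * ψl κ x * pd ν χmu x) * χm x)
        + (lam * mu / (lam + mu)) * ((∑ ν, ψl ν x * pd ν χmu x) * pd i χm x) := by
    intro i
    funext x
    rw [pd_congr i (g := fun y =>
        (lam * mu / (lam + mu)) * ((∑ ν, ψl ν y * pd ν χmu y) * χm y))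
      (fun y => mul_assoc _ _ _)]
    rw [pd_const_mul i _ (dS.fun_mul dχm) x]
    rw [pd_mul i dS dχm x]
    rw [hdS i x]
    linear_combination ((∑ ν, ∑ κ, pd i (pd κ (K ν)) x * ψl κ x * pd ν χmu x) * χm x) * hcc
  -- second derivative of ψl
  have hdψ2 : ∀ j i v (x : Fin n → ℝ), pd j (pd i (ψl v)) x
      = lam * ∑ κ, (pd j (pd i (pd κ (K v))) x * ψl κ x
          + pd i (pd κ (K v)) x * pd j (ψl κ) x) := by
    intro j i v x
    rw [pd_congr j (g := fun z => lam * ∑ κ, pd i (pd κ (K v)) z * ψl κ z)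
      (fun z => hspl v i z)]
    rw [pd_const_mul j _ (Differentiable.fun_sum fun κ _ => (dK2 i κ v).fun_mul (dψ κ)) x]
    rw [pd_sum j Finset.univ (fun κ => (dK2 i κ v).fun_mul (dψ κ)) x]
    congr 1
    exact Finset.sum_congr rfl fun κ _ => pd_mul j (dK2 i κ v) (dψ κ) x
  -- derivative of T
  have hdT : ∀ j i (x : Fin n → ℝ),
      pd j (fun y => ∑ ν, ∑ κ, pd i (pd κ (K ν)) y * ψl κ y * pd ν χmu y) x
      = ∑ ν, ∑ κ, (pd j (pd i (pd κ (K ν))) x * ψl κ x * pd ν χmu x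
          + pd i (pd κ (K ν)) x * pd j (ψl κ) x * pd ν χmu x
          + pd i (pd κ (K ν)) x * ψl κ x
              * (mu * ∑ ρ, pd j (pd ν (K ρ)) x * pd ρ χmu x)) := by
    intro j i x
    rw [pd_sum j Finset.univ (fun ν => Differentiable.fun_sum fun κ _ =>
      ((dK2 i κ ν).fun_mul (dψ κ)).fun_mul (dχmu1 ν)) x]
    refine Finset.sum_congr rfl fun ν _ => ?_
    rw [pd_sum j Finset.univ (fun κ => ((dK2 i κ ν).fun_mul (dψ κ)).fun_mul (dχmu1 ν)) x]
    refine Finset.sum_congr rfl fun κ _ => ?_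
    rw [pd_mul j ((dK2 i κ ν).fun_mul (dψ κ)) (dχmu1 ν) x,
      pd_mul j (dK2 i κ ν) (dψ κ) x, hsspmu j ν x]
    ring
  intro α γ x
  -- expand pd α pd γ of G ν
  have hG : ∀ v, pd α (pd γ (fun y => ψl v y * χm y)) x
      = (lam * ∑ κ, (pd α (pd γ (pd κ (K v))) x * ψl κ x
            + pd γ (pd κ (K v)) x * pd α (ψl κ) x)) * χm x
        + pd γ (ψl v) x * pd α χm x + pd α (ψl v) x * pd γ χm x
        + ψl v x * ((-lam) * ∑ ρ, pd α (pd γ (K ρ)) x * pd ρ χm x) := by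
    intro v
    rw [pd_congr α (g := fun z => pd γ (ψl v) z * χm z + ψl v z * pd γ χm z)
      (fun z => pd_mul γ (dψ v) dχm z)]
    rw [pd_add α ((dψ1 γ v).fun_mul dχm) ((dψ v).fun_mul (dχm1 γ)) x]
    rw [pd_mul α (dψ1 γ v) dχm x, pd_mul α (dψ v) (dχm1 γ) x]
    rw [hsspm α γ x, hdψ2 α γ v x]
    ring
  rw [hdΞ γ]
  simp only [hdΞ, hG]
  -- expand the outer derivative on the left
  have hL : pd α (fun z =>
        lam * mu * ((∑ ν, ∑ κ, pd γ (pd κ (K ν)) z * ψl κ z * pd ν χmu z) * χm z)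
        + (lam * mu / (lam + mu)) * ((∑ ν, ψl ν z * pd ν χmu z) * pd γ χm z)) x
      = lam * mu * ((∑ ν, ∑ κ, (pd α (pd γ (pd κ (K ν))) x * ψl κ x * pd ν χmu x
            + pd γ (pd κ (K ν)) x * pd α (ψl κ) x * pd ν χmu x
            + pd γ (pd κ (K ν)) x * ψl κ x
                * (mu * ∑ ρ, pd α (pd ν (K ρ)) x * pd ρ χmu x))) * χm x
          + (∑ ν, ∑ κ, pd γ (pd κ (K ν)) x * ψl κ x * pd ν χmu x) * pd α χm x)
        + (lam * mu / (lam + mu))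
          * (((lam + mu) * (∑ ν, ∑ κ, pd α (pd κ (K ν)) x * ψl κ x * pd ν χmu x))
              * pd γ χm x
            + (∑ ν, ψl ν x * pd ν χmu x)
              * ((-lam) * ∑ ν, pd α (pd γ (K ν)) x * pd ν χm x)) := by
    have dT : Differentiable ℝ (fun z => ∑ ν, ∑ κ, pd γ (pd κ (K ν)) z * ψl κ z * pd ν χmu z) :=
      Differentiable.fun_sum fun ν _ => Differentiable.fun_sum fun κ _ =>
        ((dK2 γ κ ν).mul (dψ κ)).mul (dχmu1 ν)
    rw [pd_add α ((differentiable_const _).fun_mul (dT.fun_mul dχm))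
      ((differentiable_const _).fun_mul (dS.fun_mul (dχm1 γ))) x]
    rw [pd_const_mul α _ (dT.fun_mul dχm) x, pd_const_mul α _ (dS.fun_mul (dχm1 γ)) x]
    rw [pd_mul α dT dχm x, pd_mul α dS (dχm1 γ) x]
    rw [hdT α γ x, hdS α x, hsspm α γ x]
  rw [hL]
  exact key (fun k v => pd γ (pd k (K v)) x) (fun k v => pd α (pd k (K v)) x)
    (fun k v => pd α (pd γ (pd k (K v))) x) (fun i k v => pd i (pd k (K v)) x)
    (fun v => pd α (pd γ (K v)) x) (fun k => ψl k x) (fun v => pd v χmu x)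
    (fun v => pd v χm x) (fun k => pd α (ψl k) x) (fun k => pd γ (ψl k) x)
    (χm x) (pd α χm x) (pd γ χm x) (∑ ν, ψl ν x * pd ν χmu x) lam mu
    (lam * mu / (lam + mu)) hcc rfl (fun κ => hspl κ α x) (fun κ => hspl κ γ x)
    (fun κ ρ => hAE α γ κ ρ x)
end

section
/- Let c^α_{βγ} be smooth functions on ℝⁿ that are symmetric (c^α_{βγ} = c^α_{γβ}) and satisfy the associativity condition c^ν_{αρ} c^ρ_{βγ} = c^ν_{ργ} c^ρ_{αβ} for all α,β,γ,ν. Let λ ∈ ℝ, let ψ = (ψ^1,…,ψ^n) be smooth functions satisfying ∂_β ψ^α = λ c^α_{βγ} ψ^γ for all α,β, and let x₀ ∈ ℝⁿ be a point at which the Jacobian matrix J^α_β = ∂_β ψ^α is invertible, with inverse M (so J^α_ε M^ε_β = δ^α_β at x₀). Define c̃^α_{βγ} = c^α_{γε} M^ε_β at x₀. Then at x₀ the c̃ are symmetric, c̃^α_{βγ} = c̃^α_{γβ}, and satisfy the associativity condition c̃^α_{βγ} c̃^γ_{ρν} = c̃^α_{νγ} c̃^γ_{ρβ} for all α,β,ν,ρ.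 -/
namespace DarbouxAux

variable {n : ℕ}

lemma sum_rot3 (f : Fin n → Fin n → Fin n → ℝ) :
    ∑ a, ∑ b, ∑ c, f a b c = ∑ b, ∑ c, ∑ a, f a b c := by
  rw [Finset.sum_comm]
  exact Finset.sum_congr rfl fun b _ => Finset.sum_comm

lemma sum_rev3 (f : Fin n → Fin n → Fin n → ℝ) :
    ∑ a, ∑ b, ∑ c, f a b c = ∑ c, ∑ b, ∑ a, f a b c :=
  (sum_rot3 f).trans Finset.sum_comm

lemma sum_swap13of4 (f : Fin n → Fin n → Fin n → Fin n → ℝ) :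
    ∑ a, ∑ b, ∑ c, ∑ e, f a b c e = ∑ c, ∑ b, ∑ a, ∑ e, f a b c e :=
  calc ∑ a, ∑ b, ∑ c, ∑ e, f a b c e = ∑ b, ∑ a, ∑ c, ∑ e, f a b c e := Finset.sum_comm
    _ = ∑ b, ∑ c, ∑ a, ∑ e, f a b c e := Finset.sum_congr rfl fun _ _ => Finset.sum_comm
    _ = ∑ c, ∑ b, ∑ a, ∑ e, f a b c e := Finset.sum_comm

/-- Triple product tensor. -/
def Gg (d : Fin n → Fin n → Fin n → ℝ) (a s t e : Fin n) : ℝ := ∑ ρ, d a ρ e * d ρ s t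

/-- Quadruple product tensor. -/
def Hh (d : Fin n → Fin n → Fin n → ℝ) (a s t k e : Fin n) : ℝ :=
  ∑ φ, ∑ ρ, d a ρ e * d ρ φ k * d φ s t

section

variable {d : Fin n → Fin n → Fin n → ℝ}
  {M : Matrix (Fin n) (Fin n) ℝ} {u : Fin n → ℝ}

lemma G12 (dsym : ∀ α β γ, d α β γ = d α γ β) (a s t e : Fin n) : Gg d a s t e = Gg d a t s e :=
  Finset.sum_congr rfl fun ρ _ => by rw [dsym ρ s t]

lemma G23 (dsym : ∀ α β γ, d α β γ = d α γ β)
    (dassoc : ∀ α β γ ν, ∑ ρ, d ν α ρ * d ρ β γ = ∑ ρ, d ν ρ γ * d ρ α β) (a s t e : Fin n) : Gg d a s t e = Gg d a s e t := by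
  unfold Gg
  calc ∑ ρ, d a ρ e * d ρ s t = ∑ ρ, d a s ρ * d ρ t e := (dassoc s t e a).symm
    _ = ∑ ρ, d a s ρ * d ρ e t := Finset.sum_congr rfl fun ρ _ => by rw [dsym ρ t e]
    _ = ∑ ρ, d a ρ t * d ρ s e := dassoc s e t a

lemma G13 (dsym : ∀ α β γ, d α β γ = d α γ β)
    (dassoc : ∀ α β γ ν, ∑ ρ, d ν α ρ * d ρ β γ = ∑ ρ, d ν ρ γ * d ρ α β) (a s t e : Fin n) : Gg d a s t e = Gg d a e t s :=
  ((G12 dsym a s t e).trans (G23 dsym dassoc a t s e)).trans (G12 dsym a t e s)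

lemma H1 (a s t k e : Fin n) : Hh d a s t k e = ∑ φ, Gg d a φ k e * d φ s t := by
  unfold Hh Gg
  exact Finset.sum_congr rfl fun φ _ => (Finset.sum_mul _ _ _).symm

lemma H2 (a s t k e : Fin n) : Hh d a s t k e = ∑ ρ, d a ρ e * Gg d ρ s t k := by
  unfold Hh Gg
  rw [Finset.sum_comm]
  refine Finset.sum_congr rfl fun ρ _ => ?_
  rw [Finset.mul_sum]
  exact Finset.sum_congr rfl fun φ _ => (mul_assoc _ _ _)

lemma Hke (dsym : ∀ α β γ, d α β γ = d α γ β)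
    (dassoc : ∀ α β γ ν, ∑ ρ, d ν α ρ * d ρ β γ = ∑ ρ, d ν ρ γ * d ρ α β) (a s t k e : Fin n) : Hh d a s t k e = Hh d a s t e k := by
  rw [H1 a s t k e, H1 a s t e k]
  exact Finset.sum_congr rfl fun φ _ => by rw [G23 dsym dassoc a φ k e]

lemma Hsk (dsym : ∀ α β γ, d α β γ = d α γ β)
    (dassoc : ∀ α β γ ν, ∑ ρ, d ν α ρ * d ρ β γ = ∑ ρ, d ν ρ γ * d ρ α β) (a s t k e : Fin n) : Hh d a s t k e = Hh d a k t s e := by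
  rw [H2 a s t k e, H2 a k t s e]
  exact Finset.sum_congr rfl fun ρ _ => by rw [G13 dsym dassoc ρ s t k]

lemma Hse (dsym : ∀ α β γ, d α β γ = d α γ β)
    (dassoc : ∀ α β γ ν, ∑ ρ, d ν α ρ * d ρ β γ = ∑ ρ, d ν ρ γ * d ρ α β) (a s t k e : Fin n) : Hh d a s t k e = Hh d a e t k s :=
  ((Hsk dsym dassoc a s t k e).trans (Hke dsym dassoc a k t s e)).trans
    (Hsk dsym dassoc a k t e s)

/-- Insertion of the identity `J M = 1` into a free lower index of `d`. -/
lemma dins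
    (hdelta : ∀ ρ γ, ∑ σ, (∑ δ, d ρ σ δ * u δ) * M σ γ = if ρ = γ then (1:ℝ) else 0)
    (a g e : Fin n) :
    d a g e = ∑ σ, ∑ δ, M σ g * (u δ * Gg d a σ δ e) := by
  have h1 : d a g e = ∑ ρ, (if ρ = g then (1:ℝ) else 0) * d a ρ e := by simp
  rw [h1]
  calc ∑ ρ, (if ρ = g then (1:ℝ) else 0) * d a ρ e
      = ∑ ρ, (∑ σ, (∑ δ, d ρ σ δ * u δ) * M σ g) * d a ρ e :=
        Finset.sum_congr rfl fun ρ _ => by rw [hdelta ρ g]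
    _ = ∑ ρ, ∑ σ, ∑ δ, d ρ σ δ * u δ * M σ g * d a ρ e := by
        simp only [Finset.sum_mul]
    _ = ∑ σ, ∑ δ, ∑ ρ, d ρ σ δ * u δ * M σ g * d a ρ e := sum_rot3 _
    _ = ∑ σ, ∑ δ, M σ g * (u δ * Gg d a σ δ e) := by
        refine Finset.sum_congr rfl fun σ _ => Finset.sum_congr rfl fun δ _ => ?_
        unfold Gg
        rw [Finset.mul_sum, Finset.mul_sum]
        exact Finset.sum_congr rfl fun ρ _ => by ring

lemma Gins
    (hdelta : ∀ ρ γ, ∑ σ, (∑ δ, d ρ σ δ * u δ) * M σ γ = if ρ = γ then (1:ℝ) else 0)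
    (a v k e : Fin n) :
    Gg d a v k e = ∑ σ, ∑ δ, M σ v * (u δ * Hh d a σ δ k e) := by
  calc Gg d a v k e = ∑ ρ, d a ρ e * d ρ v k := rfl
    _ = ∑ ρ, d a ρ e * (∑ σ, ∑ δ, M σ v * (u δ * Gg d ρ σ δ k)) :=
        Finset.sum_congr rfl fun ρ _ => by rw [← dins hdelta ρ v k]
    _ = ∑ ρ, ∑ σ, ∑ δ, d a ρ e * (M σ v * (u δ * Gg d ρ σ δ k)) := by
        simp only [Finset.mul_sum]
    _ = ∑ σ, ∑ δ, ∑ ρ, d a ρ e * (M σ v * (u δ * Gg d ρ σ δ k)) := sum_rot3 _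
    _ = ∑ σ, ∑ δ, M σ v * (u δ * Hh d a σ δ k e) := by
        refine Finset.sum_congr rfl fun σ _ => Finset.sum_congr rfl fun δ _ => ?_
        rw [H2 a σ δ k e, Finset.mul_sum, Finset.mul_sum]
        exact Finset.sum_congr rfl fun ρ _ => by ring

end

end DarbouxAux

open DarbouxAux in
/-- Darboux-type transformation, pointwise version: if `ψ` solves the
spectral problem and its Jacobian `J^α_β = ∂_β ψ^α` is invertible at `x₀` with inverse
`M`, then `c̃^α_{βγ} = c^α_{γε} M^ε_β` is symmetric and associative at `x₀`. -/
theorem darboux_transformed_structure_constants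
    {n : ℕ} (hn : 1 ≤ n)
    (c : Fin n → Fin n → Fin n → (Fin n → ℝ) → ℝ)
    (ψ : Fin n → (Fin n → ℝ) → ℝ) (lam : ℝ)
    (x₀ : Fin n → ℝ)
    (M : Matrix (Fin n) (Fin n) ℝ)
    (hc : ∀ α β γ, ContDiff ℝ (⊤ : ℕ∞) (c α β γ))
    (hψ : ∀ α, ContDiff ℝ (⊤ : ℕ∞) (ψ α))
    (hcomm : ∀ α β γ, ∀ x : Fin n → ℝ, c α β γ x = c α γ β x)
    (hassoc : ∀ α β γ ν, ∀ x : Fin n → ℝ,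
      ∑ ρ, c ν α ρ x * c ρ β γ x = ∑ ρ, c ν ρ γ x * c ρ α β x)
    (hsp : ∀ α β, ∀ x : Fin n → ℝ,
      pd β (ψ α) x = lam * ∑ γ, c α β γ x * ψ γ x)
    (hJM : ∀ α β, ∑ ε, pd ε (ψ α) x₀ * M ε β = if α = β then (1 : ℝ) else 0)
    (cT : Fin n → Fin n → Fin n → ℝ)
    (hcT : ∀ α β γ, cT α β γ = ∑ ε, c α γ ε x₀ * M ε β) :
    (∀ α β γ, cT α β γ = cT α γ β) ∧
    (∀ α β ν ρ, ∑ γ, cT α β γ * cT γ ρ ν = ∑ γ, cT α ν γ * cT γ ρ β) := by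
  classical
  set d : Fin n → Fin n → Fin n → ℝ := fun a b g => c a b g x₀ with hdd
  set u : Fin n → ℝ := fun δ => lam * ψ δ x₀ with huu
  have dsym : ∀ α β γ, d α β γ = d α γ β := fun α β γ => hcomm α β γ x₀
  have dassoc : ∀ α β γ ν, ∑ ρ, d ν α ρ * d ρ β γ = ∑ ρ, d ν ρ γ * d ρ α β :=
    fun α β γ ν => hassoc α β γ ν x₀
  have hdelta : ∀ ρ γ, ∑ σ, (∑ δ, d ρ σ δ * u δ) * M σ γ = if ρ = γ then (1:ℝ) else 0 := by
    intro ρ γ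
    rw [← hJM ρ γ]
    refine Finset.sum_congr rfl fun σ _ => ?_
    congr 1
    rw [hsp ρ σ x₀, Finset.mul_sum]
    exact Finset.sum_congr rfl fun δ _ => by simp only [hdd, huu]; ring
  have repcT : ∀ a b g, cT a b g = ∑ e, d a g e * M e b := by
    intro a b g
    simp only [hdd]
    exact hcT a b g
  have keyrep : ∀ a b g, cT a b g
      = ∑ σ, ∑ δ, ∑ e, M σ g * (u δ * (M e b * Gg d a σ δ e)) := by
    intro a b g
    calc cT a b g = ∑ e, d a g e * M e b := repcT a b g
      _ = ∑ e, (∑ σ, ∑ δ, M σ g * (u δ * Gg d a σ δ e)) * M e b :=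
          Finset.sum_congr rfl fun e _ => by rw [← dins hdelta a g e]
      _ = ∑ e, ∑ σ, ∑ δ, M σ g * (u δ * Gg d a σ δ e) * M e b := by
          simp only [Finset.sum_mul]
      _ = ∑ σ, ∑ δ, ∑ e, M σ g * (u δ * Gg d a σ δ e) * M e b := sum_rot3 _
      _ = ∑ σ, ∑ δ, ∑ e, M σ g * (u δ * (M e b * Gg d a σ δ e)) := by
          refine Finset.sum_congr rfl fun σ _ => Finset.sum_congr rfl fun δ _ =>
            Finset.sum_congr rfl fun e _ => by ring
  have Slem : ∀ a b r v, ∑ γ, cT a b γ * cT γ r v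
      = ∑ e, ∑ k, ∑ σ, ∑ δ, M e b * (M k r * (M σ v * (u δ * Hh d a σ δ k e))) := by
    intro a b r v
    calc ∑ γ, cT a b γ * cT γ r v
        = ∑ γ, (∑ e, d a γ e * M e b) * (∑ k, d γ v k * M k r) :=
          Finset.sum_congr rfl fun γ _ => by rw [repcT a b γ, repcT γ r v]
      _ = ∑ γ, ∑ e, (d a γ e * M e b) * (∑ k, d γ v k * M k r) := by
          simp only [Finset.sum_mul]
      _ = ∑ γ, ∑ e, ∑ k, (d a γ e * M e b) * (d γ v k * M k r) := by
          simp only [Finset.mul_sum]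
      _ = ∑ e, ∑ k, ∑ γ, (d a γ e * M e b) * (d γ v k * M k r) := sum_rot3 _
      _ = ∑ e, ∑ k, M e b * (M k r * Gg d a v k e) := by
          refine Finset.sum_congr rfl fun e _ => Finset.sum_congr rfl fun k _ => ?_
          rw [show Gg d a v k e = ∑ γ, d a γ e * d γ v k from rfl,
            Finset.mul_sum, Finset.mul_sum]
          exact Finset.sum_congr rfl fun γ _ => by ring
      _ = ∑ e, ∑ k, M e b * (M k r * (∑ σ, ∑ δ, M σ v * (u δ * Hh d a σ δ k e))) := by
          refine Finset.sum_congr rfl fun e _ => Finset.sum_congr rfl fun k _ => ?_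
          rw [Gins hdelta a v k e]
      _ = ∑ e, ∑ k, ∑ σ, ∑ δ, M e b * (M k r * (M σ v * (u δ * Hh d a σ δ k e))) := by
          simp only [Finset.mul_sum]
  constructor
  · intro α β γ
    rw [keyrep α β γ, keyrep α γ β]
    calc ∑ σ, ∑ δ, ∑ e, M σ γ * (u δ * (M e β * Gg d α σ δ e))
        = ∑ σ, ∑ δ, ∑ e, M σ γ * (u δ * (M e β * Gg d α e δ σ)) := by
          refine Finset.sum_congr rfl fun σ _ => Finset.sum_congr rfl fun δ _ =>
            Finset.sum_congr rfl fun e _ => by rw [G13 dsym dassoc α σ δ e]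
      _ = ∑ e, ∑ δ, ∑ σ, M σ γ * (u δ * (M e β * Gg d α e δ σ)) :=
          sum_rev3 (fun σ δ e => M σ γ * (u δ * (M e β * Gg d α e δ σ)))
      _ = ∑ σ, ∑ δ, ∑ e, M σ β * (u δ * (M e γ * Gg d α σ δ e)) := by
          refine Finset.sum_congr rfl fun x _ => Finset.sum_congr rfl fun y _ =>
            Finset.sum_congr rfl fun z _ => by ring
  · intro α β ν ρ
    rw [Slem α β ρ ν, Slem α ν ρ β]
    calc ∑ e, ∑ k, ∑ σ, ∑ δ, M e β * (M k ρ * (M σ ν * (u δ * Hh d α σ δ k e)))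
        = ∑ e, ∑ k, ∑ σ, ∑ δ, M e β * (M k ρ * (M σ ν * (u δ * Hh d α e δ k σ))) := by
          refine Finset.sum_congr rfl fun e _ => Finset.sum_congr rfl fun k _ =>
            Finset.sum_congr rfl fun σ _ => Finset.sum_congr rfl fun δ _ => by
              rw [Hse dsym dassoc α σ δ k e]
      _ = ∑ σ, ∑ k, ∑ e, ∑ δ, M e β * (M k ρ * (M σ ν * (u δ * Hh d α e δ k σ))) :=
          sum_swap13of4 (fun e k σ δ => M e β * (M k ρ * (M σ ν * (u δ * Hh d α e δ k σ))))
      _ = ∑ e, ∑ k, ∑ σ, ∑ δ, M e ν * (M k ρ * (M σ β * (u δ * Hh d α σ δ k e))) := by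
          refine Finset.sum_congr rfl fun x _ => Finset.sum_congr rfl fun y _ =>
            Finset.sum_congr rfl fun z _ => Finset.sum_congr rfl fun w _ => by ring
end

section
/- Let K = (K^1,…,K^n) be smooth functions on ℝⁿ and suppose there exist smooth functions G^β on ℝⁿ (β = 1,…,n) such that ∂_α∂_γ K^ν ∂_ν K^β = ∂_α∂_γ G^β for all α,β,γ at every point. Then K satisfies the oriented associativity equations (AE). -/
lemma pd_contDiff {n : ℕ} (i : Fin n) {f : (Fin n → ℝ) → ℝ} (hf : ContDiff ℝ (⊤ : ℕ∞) f) :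
    ContDiff ℝ (⊤ : ℕ∞) (pd i f) := by
  have h1 : ContDiff ℝ (⊤ : ℕ∞) (fderiv ℝ f) := (hf.fderiv_right (m := (⊤ : ℕ∞)) le_rfl)
  exact (ContinuousLinearMap.apply ℝ ℝ (Pi.single i 1)).contDiff.comp h1

lemma pd_eq_snd {n : ℕ} (i j : Fin n) {f : (Fin n → ℝ) → ℝ} (hf : ContDiff ℝ (⊤ : ℕ∞) f)
    (x : Fin n → ℝ) :
    pd i (pd j f) x = fderiv ℝ (fderiv ℝ f) x (Pi.single i 1) (Pi.single j 1) := by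
  have hdf : ContDiff ℝ (⊤ : ℕ∞) (fderiv ℝ f) := hf.fderiv_right (m := (⊤ : ℕ∞)) le_rfl
  have h : HasFDerivAt ((ContinuousLinearMap.apply ℝ ℝ (Pi.single (M := fun _ : Fin n => ℝ) j 1)) ∘ (fderiv ℝ f))
      ((ContinuousLinearMap.apply ℝ ℝ (Pi.single (M := fun _ : Fin n => ℝ) j 1)).comp
        (fderiv ℝ (fderiv ℝ f) x)) x :=
    (ContinuousLinearMap.apply ℝ ℝ _).hasFDerivAt.comp x
      (hdf.differentiable (by simp) x).hasFDerivAt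
  have h' : HasFDerivAt (fun y => fderiv ℝ f y (Pi.single (M := fun _ : Fin n => ℝ) j 1))
      ((ContinuousLinearMap.apply ℝ ℝ (Pi.single (M := fun _ : Fin n => ℝ) j 1)).comp
        (fderiv ℝ (fderiv ℝ f) x)) x := h
  unfold pd
  rw [h'.fderiv]
  rfl

lemma pd_comm {n : ℕ} (i j : Fin n) {f : (Fin n → ℝ) → ℝ} (hf : ContDiff ℝ (⊤ : ℕ∞) f)
    (x : Fin n → ℝ) : pd i (pd j f) x = pd j (pd i f) x := by
  rw [pd_eq_snd i j hf, pd_eq_snd j i hf]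
  exact (hf.contDiffAt.isSymmSndFDerivAt (by rw [minSmoothness_of_isRCLikeNormedField]; exact WithTop.coe_le_coe.mpr le_top)).eq _ _

lemma pd_hasFDerivAt {n : ℕ} {f : (Fin n → ℝ) → ℝ} (hf : ContDiff ℝ (⊤ : ℕ∞) f) (x : Fin n → ℝ) :
    HasFDerivAt f (fderiv ℝ f x) x :=
  (hf.differentiable (by simp) x).hasFDerivAt

/-- Leibniz rule for a sum of products. -/
lemma pd_sum_mul {n : ℕ} (d : Fin n) (u v : Fin n → (Fin n → ℝ) → ℝ)
    (hu : ∀ ν, ContDiff ℝ (⊤ : ℕ∞) (u ν)) (hv : ∀ ν, ContDiff ℝ (⊤ : ℕ∞) (v ν)) (x : Fin n → ℝ) :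
    pd d (fun y => ∑ ν, u ν y * v ν y) x
      = ∑ ν, (pd d (u ν) x * v ν x + u ν x * pd d (v ν) x) := by
  have h : HasFDerivAt (fun y => ∑ ν, u ν y * v ν y)
      (∑ ν, (u ν x • fderiv ℝ (v ν) x + v ν x • fderiv ℝ (u ν) x)) x := by
    apply HasFDerivAt.fun_sum
    intro ν _
    exact (pd_hasFDerivAt (hu ν) x).mul (pd_hasFDerivAt (hv ν) x)
  unfold pd
  rw [h.fderiv]
  simp only [ContinuousLinearMap.sum_apply, ContinuousLinearMap.add_apply,
    ContinuousLinearMap.smul_apply, smul_eq_mul]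
  exact Finset.sum_congr rfl fun ρ _ => by ring

/-- intermediate integral: if there exist `G^β` with
`∂_α∂_γ K^ν ∂_ν K^β = ∂_α∂_γ G^β`, then `K` satisfies the oriented associativity
equations. -/
theorem intermediate_integral_second_order
    {n : ℕ} (hn : 1 ≤ n)
    (K G : Fin n → (Fin n → ℝ) → ℝ)
    (hK : ∀ α, ContDiff ℝ (⊤ : ℕ∞) (K α))
    (hG : ∀ β, ContDiff ℝ (⊤ : ℕ∞) (G β))
    (hGi : ∀ α β γ, ∀ x : Fin n → ℝ,
      ∑ ν, pd α (pd γ (K ν)) x * pd ν (K β) x = pd α (pd γ (G β)) x) :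
    ∀ α β γ ν, ∀ x : Fin n → ℝ,
      ∑ ρ, pd α (pd ρ (K ν)) x * pd β (pd γ (K ρ)) x
        = ∑ ρ, pd α (pd β (K ρ)) x * pd ρ (pd γ (K ν)) x := by
  -- Key derived identity: differentiate hGi in direction d, use symmetry of the
  -- third derivatives of K and G.
  have key : ∀ a g d b, ∀ x : Fin n → ℝ,
      ∑ ρ, pd a (pd g (K ρ)) x * pd d (pd ρ (K b)) x
        = ∑ ρ, pd d (pd g (K ρ)) x * pd a (pd ρ (K b)) x := by
    intro a g d b x
    have hKag : ∀ ρ, ContDiff ℝ (⊤ : ℕ∞) (pd a (pd g (K ρ))) :=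
      fun ρ => pd_contDiff a (pd_contDiff g (hK ρ))
    have hKdg : ∀ ρ, ContDiff ℝ (⊤ : ℕ∞) (pd d (pd g (K ρ))) :=
      fun ρ => pd_contDiff d (pd_contDiff g (hK ρ))
    have hKb : ∀ ρ, ContDiff ℝ (⊤ : ℕ∞) (pd ρ (K b)) := fun ρ => pd_contDiff ρ (hK b)
    -- differentiate the two instances of hGi
    have e1 : pd d (fun y => ∑ ρ, pd a (pd g (K ρ)) y * pd ρ (K b) y) x
        = pd d (pd a (pd g (G b))) x := by
      congr 1; funext y; exact hGi a b g y
    have e2 : pd a (fun y => ∑ ρ, pd d (pd g (K ρ)) y * pd ρ (K b) y) x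
        = pd a (pd d (pd g (G b))) x := by
      congr 1; funext y; exact hGi d b g y
    rw [pd_sum_mul d _ _ hKag hKb] at e1
    rw [pd_sum_mul a _ _ hKdg hKb] at e2
    have eG : pd d (pd a (pd g (G b))) x = pd a (pd d (pd g (G b))) x :=
      pd_comm d a (pd_contDiff g (hG b)) x
    have eK : ∀ ρ, pd d (pd a (pd g (K ρ))) x = pd a (pd d (pd g (K ρ))) x :=
      fun ρ => pd_comm d a (pd_contDiff g (hK ρ)) x
    have h12 : ∑ ρ, (pd d (pd a (pd g (K ρ))) x * pd ρ (K b) x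
          + pd a (pd g (K ρ)) x * pd d (pd ρ (K b)) x)
        = ∑ ρ, (pd a (pd d (pd g (K ρ))) x * pd ρ (K b) x
          + pd d (pd g (K ρ)) x * pd a (pd ρ (K b)) x) := by
      rw [e1, e2, eG]
    simp only [eK] at h12
    rw [Finset.sum_add_distrib, Finset.sum_add_distrib] at h12
    exact add_left_cancel h12
  intro α β γ ν x
  have h1 := key α β γ ν x
  calc ∑ ρ, pd α (pd ρ (K ν)) x * pd β (pd γ (K ρ)) x
      = ∑ ρ, pd γ (pd β (K ρ)) x * pd α (pd ρ (K ν)) x := by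
        apply Finset.sum_congr rfl; intro ρ _
        rw [pd_comm γ β (hK ρ) x, mul_comm]
    _ = ∑ ρ, pd α (pd β (K ρ)) x * pd γ (pd ρ (K ν)) x := (key α β γ ν x).symm
    _ = ∑ ρ, pd α (pd β (K ρ)) x * pd ρ (pd γ (K ν)) x := by
        apply Finset.sum_congr rfl; intro ρ _
        rw [pd_comm γ ρ (hK ν) x]
end
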